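/- arXiv:1506.01074 — 6 statements merged into one kernel-verified Lean document; each statement's English description precedes it below -/
import Mathlib

section
/- If α, β are elements of the profinite completion of (ℕ,+) and d is a positive natural number such that d·α = d·β, then α = β (i.e., the profinite completion of ℕ is torsion-free as far as cancellation by positive integers is concerned). -/
/-!
By naturality, an element of `N̂` acts on each element `y` of a finite monoid as some power
`y ^ a`. Given `x` with `x ^ (n + p) = x ^ n`, test `α` and `β` on
`y = (x, s, g) ∈ M × End (Fin (d n + 1)) × Multiplicative (ℤ/d p)`, where `s` is the successor
truncated at `d n` and `g` a generator. There `α y = y ^ a` and `β y = y ^ b`, and projecting to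
`M` gives `α x = x ^ a`, `β x = x ^ b`. The hypothesis `y ^ (d a) = y ^ (d b)` read in the
last two factors gives `min a n = min b n` and `a ≡ b [MOD p]`, which is what `x ^ a = x ^ b`
requires.
-/

/-- The profinite completion `N̂` of the additive monoid `(ℕ,+)`, i.e. the free profinite
monoid on one generator, modelled as the monoid of unary implicit operations on finite
monoids: natural families `x ↦ x^α` commuting with all homomorphisms of finite monoids. -/
structure Nhat where
  F : ∀ (M : Type) [Monoid M] [Fintype M], M → M
  natural : ∀ {M N : Type} [Monoid M] [Fintype M] [Monoid N] [Fintype N]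
      (f : M →* N) (x : M), f (F M x) = F N (f x)

/-- Scalar multiplication `d • α` in `N̂` (additive notation), i.e. `x^{d·α} = (x^α)^d`. -/
def Nhat.nsmul (d : ℕ) (α : Nhat) : Nhat where
  F := fun M _ _ x => (α.F M x) ^ d
  natural := by
    intro M N _ _ _ _ f x
    rw [map_pow, α.natural f x]

section EventualPeriodicity

variable {M : Type*} [Monoid M]

theorem exists_pow_add_eq_pow [Finite M] (x : M) :
    ∃ n p : ℕ, 0 < p ∧ x ^ (n + p) = x ^ n := by
  obtain ⟨i, j, hne, hij⟩ := Finite.exists_ne_map_eq_of_infinite (x ^ · : ℕ → M)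
  rcases Nat.lt_or_gt_of_ne hne with h | h
  · exact ⟨i, j - i, by omega, by rw [Nat.add_sub_cancel' h.le, hij]⟩
  · exact ⟨j, i - j, by omega, by rw [Nat.add_sub_cancel' h.le, hij]⟩

theorem pow_eq_pow_of_min_eq_of_modEq {x : M} {n p a b : ℕ} (hx : x ^ (n + p) = x ^ n)
    (hmin : min a n = min b n) (hmod : a ≡ b [MOD p]) : x ^ a = x ^ b := by
  obtain rfl | ⟨ha, hb⟩ : a = b ∨ n ≤ a ∧ n ≤ b := by omega
  · rfl
  have hper : Function.IsPeriodicPt (x * ·) p (x ^ n) := by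
    simp only [Function.IsPeriodicPt, Function.IsFixedPt, mul_left_iterate, ← pow_add,
      add_comm p, hx]
  have hpow : ∀ k, n ≤ k → x ^ k = (x * ·)^[(k - n) % p] (x ^ n) := fun k hk => by
    rw [hper.iterate_mod_apply, mul_left_iterate_apply, ← pow_add, Nat.sub_add_cancel hk]
  rw [hpow a ha, hpow b hb, (Nat.ModEq.add_right_cancel' n _ : a - n ≡ b - n [MOD p])]
  rwa [Nat.sub_add_cancel ha, Nat.sub_add_cancel hb]

end EventualPeriodicity

instance {α : Type*} [Fintype α] [DecidableEq α] : Fintype (Function.End α) :=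
  inferInstanceAs (Fintype (α → α))

def capSucc (K : ℕ) : Function.End (Fin (K + 1)) := fun i => ⟨min (i + 1) K, by omega⟩

theorem capSucc_pow_apply_zero (K k : ℕ) : ((capSucc K ^ k) 0 : ℕ) = min k K := by
  induction k with
  | zero => rfl
  | succ k ih =>
    rw [pow_succ']
    show min ((capSucc K ^ k) 0 + 1 : ℕ) K = _
    omega

theorem min_eq_min_of_capSucc_pow_eq {K i j : ℕ} (h : capSucc K ^ i = capSucc K ^ j) :
    min i K = min j K := by
  simpa only [capSucc_pow_apply_zero] using congrArg (fun f => (f 0 : ℕ)) h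

theorem ofAdd_one_pow_eq_pow_iff {m i j : ℕ} :
    Multiplicative.ofAdd (1 : ZMod m) ^ i = Multiplicative.ofAdd 1 ^ j ↔ i ≡ j [MOD m] := by
  simp only [← ofAdd_nsmul, nsmul_one, EmbeddingLike.apply_eq_iff_eq, ZMod.natCast_eq_natCast_iff]

namespace Nhat

theorem ext {α β : Nhat}
    (h : ∀ (M : Type) [Monoid M] [Fintype M] (x : M), α.F M x = β.F M x) : α = β := by
  cases α; cases β
  congr
  funext M _ _ x
  exact h M x

theorem nsmul_F (d : ℕ) (α : Nhat) {M : Type} [Monoid M] [Fintype M] (x : M) :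
    (α.nsmul d).F M x = α.F M x ^ d := rfl

theorem exists_F_eq_pow (α : Nhat) {M : Type} [Monoid M] [Fintype M] (x : M) :
    ∃ a : ℕ, α.F M x = x ^ a := by
  classical
  obtain ⟨a, ha⟩ := (α.F (Submonoid.powers x) ⟨x, Submonoid.mem_powers x⟩).2
  exact ⟨a, (α.natural (Submonoid.powers x).subtype _).symm.trans ha.symm⟩

theorem F_map_eq_pow (α : Nhat) {M N : Type} [Monoid M] [Fintype M] [Monoid N] [Fintype N]
    (f : M →* N) {x : M} {a : ℕ} (hx : α.F M x = x ^ a) : α.F N (f x) = f x ^ a := by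
  rw [← α.natural, hx, map_pow]

end Nhat

/-- If `d·α = d·β` in the profinite completion of `(ℕ,+)` with `d` a positive natural
number, then `α = β`. -/
theorem cancel_nsmul_Nhat (α β : Nhat) (d : ℕ) (hd : 0 < d)
    (h : Nhat.nsmul d α = Nhat.nsmul d β) : α = β := by
  refine Nhat.ext fun M _ _ x => ?_
  obtain ⟨n, p, hp, hx⟩ := exists_pow_add_eq_pow x
  have : NeZero (d * p) := ⟨by positivity⟩
  let y : M × Function.End (Fin (d * n + 1)) × Multiplicative (ZMod (d * p)) :=
    (x, capSucc (d * n), Multiplicative.ofAdd 1)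
  obtain ⟨a, ha⟩ := α.exists_F_eq_pow y
  obtain ⟨b, hb⟩ := β.exists_F_eq_pow y
  have hy : y ^ (d * a) = y ^ (d * b) := by
    have := congrArg (fun γ : Nhat => γ.F _ y) h
    simpa only [Nhat.nsmul_F, ha, hb, ← pow_mul'] using this
  obtain ⟨-, hcap, hrot⟩ : _ ∧ _ ∧ _ := by
    simpa only [y, Prod.pow_mk, Prod.mk.injEq] using hy
  have hmin : min a n = min b n := Nat.eq_of_mul_eq_mul_left hd <| by
    simpa only [min_mul_mul_left] using min_eq_min_of_capSucc_pow_eq hcap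
  have hmod : a ≡ b [MOD p] := (ofAdd_one_pow_eq_pow_iff.1 hrot).mul_left_cancel' hd.ne'
  calc α.F M x = x ^ a := α.F_map_eq_pow (MonoidHom.fst _ _) ha
    _ = x ^ b := pow_eq_pow_of_min_eq_of_modEq hx hmin hmod
    _ = β.F M x := (β.F_map_eq_pow (MonoidHom.fst _ _) hb).symm
end

section
/- Let Γ be a finite directed multigraph and (π_k) a sequence of paths in Γ. If there is an edge ζ such that the sequence of the numbers of times π_k traverses ζ is unbounded, then there exists a cycle γ in Γ such that the sequence (min over edges e of γ of the number of times π_k traverses e) is unbounded. -/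
/-!
Between two consecutive traversals of `ζ`, a path runs through a closed walk starting with `ζ`;
erasing its loops leaves a simple cycle through `ζ` whose edges all lie in that stretch of the
path. So a path traversing `ζ` at least `n + 1` times contains `n` such simple cycles in
disjoint stretches. There are only finitely many simple cycles, say `N`, so by pigeonhole one
of them occurs at least `n / N` times, and every edge of it is traversed that often.
Finiteness again yields a single cycle that works for every bound.
-/

open Filter

namespace List

variable {α : Type*} {R : α → α → Prop}

theorem IsChain.exists_nodup_sublist :
    ∀ {l : List α}, l.IsChain R →
      ∃ q, q <+ l ∧ q.Nodup ∧ q.IsChain R ∧ q.head? = l.head? ∧ q.getLast? = l.getLast?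
  | [], _ => ⟨[], Sublist.slnil, nodup_nil, .nil, rfl, rfl⟩
  | x :: l, h => by
    obtain ⟨q, hsub, hnd, hq, hhead, hlast⟩ := h.tail.exists_nodup_sublist
    by_cases hx : x ∈ q
    · obtain ⟨s, t, rfl⟩ := append_of_mem hx
      refine ⟨x :: t, ((sublist_append_right s _).trans hsub).cons x,
        hnd.sublist (sublist_append_right s _), hq.suffix (suffix_append s _), rfl, ?_⟩
      rw [getLast?_append_cons, tail_cons] at hlast
      rw [getLast?_cons (l := l), ← hlast, getLast?_cons, Option.getD_some]
    · refine ⟨x :: q, hsub.cons_cons x, nodup_cons.2 ⟨hx, hnd⟩, ?_, rfl, ?_⟩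
      · exact hq.cons (hhead ▸ h.rel_head?)
      · simp [getLast?_cons, hlast]

theorem IsChain.exists_nodup_cycle_sublist {a : α} {l : List α}
    (h : (a :: l ++ [a]).IsChain R) :
    ∃ γ, γ <+ l ∧ (a :: γ).Nodup ∧ (a :: γ ++ [a]).IsChain R := by
  obtain ⟨hal, -, hclose⟩ := isChain_append.1 h
  obtain ⟨q, hsub, hnd, hq, hhead, hlast⟩ := hal.exists_nodup_sublist
  obtain ⟨γ, rfl⟩ : ∃ γ, q = a :: γ := by
    cases q with
    | nil => simp at hhead
    | cons b γ => exact ⟨γ, by simpa using hhead⟩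
  exact ⟨γ, cons_sublist_cons.1 hsub, hnd, isChain_append.2 ⟨hq, .singleton a, hlast ▸ hclose⟩⟩

variable [DecidableEq α]

theorem IsChain.exists_nodup_cycles_flatten_sublist (ζ : α) {p : List α} (hp : p.IsChain R) :
    ∃ L : List (List α), (∀ γ ∈ L, (ζ :: γ).Nodup ∧ (ζ :: γ ++ [ζ]).IsChain R) ∧
      (L.map (ζ :: ·)).flatten <+ p ∧ p.count ζ ≤ L.length + 1 := by
  induction hn : p.length using Nat.strong_induction_on generalizing p with
  | _ n ih =>
  by_cases hζ : ζ ∈ p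
  swap
  · exact ⟨[], by simp, by simp, by simp [count_eq_zero.2 hζ]⟩
  obtain ⟨a, b, rfl, ha⟩ := eq_append_cons_of_mem hζ
  by_cases hζb : ζ ∈ b
  swap
  · exact ⟨[], by simp, by simp, by simp [count_eq_zero.2 ha, count_eq_zero.2 hζb]⟩
  obtain ⟨c, d, rfl, hc⟩ := eq_append_cons_of_mem hζb
  have hloop : (ζ :: c ++ [ζ]).IsChain R := hp.infix ⟨a, d, by simp⟩
  obtain ⟨γ, hγc, hγ⟩ := hloop.exists_nodup_cycle_sublist
  obtain ⟨L, hL, hsub, hcount⟩ :=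
    ih (ζ :: d).length (by simp [← hn]; omega) (hp.suffix ⟨a ++ ζ :: c, by simp⟩) rfl
  refine ⟨γ :: L, forall_mem_cons.2 ⟨hγ, hL⟩, ?_, ?_⟩
  · exact ((hγc.cons_cons ζ).append hsub).trans (sublist_append_right a _)
  · simp [count_append, count_eq_zero.2 ha, count_eq_zero.2 hc] at hcount ⊢
    omega

theorem count_le_count_of_map_flatten_sublist {β : Type*} [DecidableEq β] {L : List β}
    {g : β → List α} {p : List α} (h : (L.map g).flatten <+ p) {b : β} {f : α}
    (hf : f ∈ g b) : L.count b ≤ p.count f := by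
  have hrep : (replicate (L.count b) (g b)).flatten <+ p := by
    simpa using ((replicate_sublist_iff.2 le_rfl).map g).flatten.trans h
  calc L.count b ≤ L.count b * (g b).count f := Nat.le_mul_of_pos_right _ (count_pos_iff.2 hf)
    _ = (replicate (L.count b) (g b)).flatten.count f := by simp [count_flatten]
    _ ≤ p.count f := hrep.count_le f

theorem exists_lt_count_of_mul_lt_length {L : List α} {S : Finset α} (hL : ∀ x ∈ L, x ∈ S)
    {n : ℕ} (h : S.card * n < L.length) : ∃ x ∈ S, n < L.count x := by
  have hsum : ∑ x ∈ S, L.count x = L.length := by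
    simpa using Multiset.sum_count_eq_card (m := (L : Multiset α)) hL
  refine Finset.exists_lt_of_sum_lt ?_
  rwa [Finset.sum_const, smul_eq_mul, hsum]

end List

theorem Finset.exists_forall_of_antitone {ι : Type*} {S : Finset ι} {P : ι → ℕ → Prop}
    (hP : ∀ i ∈ S, Antitone (P i)) (h : ∀ n, ∃ i ∈ S, P i n) : ∃ i ∈ S, ∀ n, P i n := by
  by_contra! hne
  have hev : ∀ᶠ n in atTop, ∀ i ∈ S, ¬ P i n := S.eventually_all.2 fun i hi => by
    obtain ⟨m, hm⟩ := hne i hi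
    exact eventually_atTop.2 ⟨m, fun n hmn hPn => hm (hP i hi hmn hPn)⟩
  obtain ⟨n, hn⟩ := hev.exists
  obtain ⟨i, hi, hPi⟩ := h n
  exact hn i hi hPi

theorem exists_unbounded_cycle_general (V E : Type) [Fintype E] [DecidableEq E]
    (src tgt : E → V) (π : ℕ → List E)
    (hpath : ∀ k, List.Chain' (fun e f => tgt e = src f) (π k))
    (ζ : E) (hunb : ∀ B : ℕ, ∃ k, B ≤ (π k).count ζ) :
    ∃ (e : E) (γ : List E),
      List.Chain' (fun e' f => tgt e' = src f) (e :: γ) ∧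
      tgt ((e :: γ).getLast (List.cons_ne_nil e γ)) = src e ∧
      ∀ B : ℕ, ∃ k, ∀ f ∈ e :: γ, B ≤ (π k).count f := by
  have hfin : {γ : List E | (ζ :: γ).Nodup ∧
      (ζ :: γ ++ [ζ]).IsChain (fun e f => tgt e = src f)}.Finite :=
    (Set.finite_range (Subtype.val : {l : List E // l.Nodup} → List E)).subset
      fun γ hγ => ⟨⟨γ, hγ.1.of_cons⟩, rfl⟩
  set S := hfin.toFinset
  have hbound : ∀ B, ∃ γ ∈ S, ∃ k, ∀ f ∈ ζ :: γ, B ≤ (π k).count f := by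
    intro B
    obtain ⟨k, hk⟩ := hunb (S.card * B + 2)
    obtain ⟨L, hL, hsub, hcount⟩ := (hpath k).exists_nodup_cycles_flatten_sublist ζ
    obtain ⟨γ, hγS, hγ⟩ := List.exists_lt_count_of_mul_lt_length
      (fun γ hγ => hfin.mem_toFinset.2 (hL γ hγ)) (by omega : S.card * B < L.length)
    exact ⟨γ, hγS, k, fun f hf =>
      hγ.le.trans (List.count_le_count_of_map_flatten_sublist hsub hf)⟩
  obtain ⟨γ, hγS, hγ⟩ := S.exists_forall_of_antitone
    (fun _ _ _ _ hmn ⟨k, hk⟩ => ⟨k, fun f hf => hmn.trans (hk f hf)⟩) hbound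
  have hcyc := (hfin.mem_toFinset.1 hγS).2
  exact ⟨ζ, γ, (List.isChain_append.1 hcyc).1,
    hcyc.rel_getLast_head_of_append (List.cons_ne_nil ζ γ) (List.cons_ne_nil ζ []), hγ⟩

/-- Let `Γ` be a finite directed multigraph (finite vertex set `V`, finite edge set `E`,
source and target maps) and `(π k)` a sequence of paths in `Γ` (lists of consecutive
edges). If there is an edge `ζ` such that the sequence of numbers of traversals of `ζ`
by `π k` is unbounded, then there is a cycle `γ` such that the sequence of the minimum,
over edges `f` of `γ`, of the number of traversals of `f` by `π k` is unbounded. -/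
theorem exists_unbounded_cycle (V E : Type) [Fintype V] [Fintype E] [DecidableEq E]
    (src tgt : E → V) (π : ℕ → List E)
    (hpath : ∀ k, List.Chain' (fun e f => tgt e = src f) (π k))
    (ζ : E) (hunb : ∀ B : ℕ, ∃ k, B ≤ (π k).count ζ) :
    ∃ (e : E) (γ : List E),
      List.Chain' (fun e' f => tgt e' = src f) (e :: γ) ∧
      tgt ((e :: γ).getLast (List.cons_ne_nil e γ)) = src e ∧
      ∀ B : ℕ, ∃ k, ∀ f ∈ e :: γ, B ≤ (π k).count f :=
  exists_unbounded_cycle_general V E src tgt π hpath ζ hunb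
end

section
/- Every finitely generated subgroup of a free group of finite rank is closed in the profinite topology (M. Hall's theorem). -/
/-- The profinite topology on a group: basic open sets are the cosets of finite-index
subgroups (equivalently, a base of neighbourhoods of the identity is given by the
finite-index normal subgroups). -/
def profiniteTopology (G : Type) [Group G] : TopologicalSpace G :=
  TopologicalSpace.generateFrom
    {s : Set G | ∃ (H : Subgroup G) (g : G), H.index ≠ 0 ∧ s = (fun h => g * h) '' (H : Set G)}

/-!
Let `H = ⟨T⟩` with `T` finite and `g ∉ H`. Only finitely many left cosets `sH` arise with `s` a
suffix of the reduced word of `g` or of an element of `T`. On this finite set `Y` each generator of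
the free group acts by a partial injection; extending these to permutations of `Y` gives an action
of the free group on a finite set that agrees with the coset action along all of those words. The
stabiliser of `H` in this action is therefore a finite-index subgroup containing `T` but not `g`.
-/

open Topology Equiv

theorem isClosed_profiniteTopology_of_forall_notMem {G : Type} [Group G] (H : Subgroup G)
    (hsep : ∀ g ∉ H, ∃ K : Subgroup G, K.index ≠ 0 ∧ H ≤ K ∧ g ∉ K) :
    IsClosed[profiniteTopology G] (H : Set G) := by
  let := profiniteTopology G
  rw [← isOpen_compl_iff, isOpen_iff_forall_mem_open]
  intro g hg
  obtain ⟨K, hK, hHK, hgK⟩ := hsep g hg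
  refine ⟨(g * ·) '' K, ?_, .basic _ ⟨K, g, hK, rfl⟩, ⟨1, K.one_mem, mul_one g⟩⟩
  rintro _ ⟨k, hk, rfl⟩ hgk
  exact hgK (by simpa using mul_mem (hHK hgk) (inv_mem hk))

namespace Equiv.Perm

variable {X : Type*}

theorem exists_perm_finset_coe_apply_eq (f : Perm X) (Y : Finset X) :
    ∃ σ : Perm Y, ∀ y : Y, f y ∈ Y → (σ y : X) = f y := by
  classical
  let e : {y : Y // f y ∈ Y} ≃ {y : Y // f⁻¹ y ∈ Y} :=
    { toFun := fun y => ⟨⟨f y, y.2⟩, by simp⟩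
      invFun := fun y => ⟨⟨f⁻¹ y, y.2⟩, by simp⟩
      left_inv := fun y => by simp
      right_inv := fun y => by simp }
  exact ⟨e.extendSubtype, fun y hy => by rw [e.extendSubtype_apply_of_mem y hy]; rfl⟩

theorem finset_coe_inv_apply_eq {Y : Finset X} {f : Perm X} {σ : Perm Y}
    (hσ : ∀ y : Y, f y ∈ Y → (σ y : X) = f y) (y : Y) (hy : f⁻¹ y ∈ Y) :
    (σ⁻¹ y : X) = f⁻¹ y := by
  have hpre : f (f⁻¹ y) ∈ Y := by simp
  have : σ ⟨f⁻¹ y, hy⟩ = y := Subtype.ext ((hσ _ hpre).trans (f.apply_symm_apply y))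
  rw [Perm.inv_eq_iff_eq.2 this.symm]

end Equiv.Perm

namespace FreeGroup

variable {α X : Type*} [MulAction (FreeGroup α) X]

theorem exists_hom_perm_apply_eq_smul (Y : Finset X) :
    ∃ φ : FreeGroup α →* Perm Y, ∀ (L : List (α × Bool)) (y : Y),
      (∀ M, M <:+ L → mk M • (y : X) ∈ Y) → (φ (mk L) y : X) = mk L • (y : X) := by
  choose σ hσ using fun a : α => Perm.exists_perm_finset_coe_apply_eq (MulAction.toPerm (of a)) Y
  have letter : ∀ (x : α × Bool) (y : Y), mk [x] • (y : X) ∈ Y →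
      (lift σ (mk [x]) y : X) = mk [x] • (y : X) := by
    rintro ⟨a, _ | _⟩ y hy
    · have hinv : mk [(a, false)] = (of a)⁻¹ := rfl
      rw [hinv, _root_.map_inv, lift_apply_of]
      exact Perm.finset_coe_inv_apply_eq (hσ a) y (by rwa [hinv] at hy)
    · exact hσ a y hy
  refine ⟨lift σ, fun L => ?_⟩
  induction L with
  | nil => intro y _; simp [← one_eq_mk]
  | cons x L ih =>
    intro y hL
    have hsplit : mk (x :: L) = mk [x] * mk L := by rw [mul_mk]; rfl
    have hL' := ih y fun M hM => hL M (hM.trans (List.suffix_cons x L))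
    have hstep : mk [x] • (lift σ (mk L) y : X) ∈ Y := by
      rw [hL', ← mul_smul, ← hsplit]
      exact hL _ (List.suffix_refl _)
    rw [hsplit, _root_.map_mul, Perm.mul_apply, letter _ _ hstep, hL', mul_smul]

theorem exists_index_ne_zero_forall_mem_iff (H : Subgroup (FreeGroup α))
    (W : Finset (FreeGroup α)) :
    ∃ K : Subgroup (FreeGroup α), K.index ≠ 0 ∧ ∀ w ∈ W, w ∈ K ↔ w ∈ H := by
  classical
  let Y : Finset (FreeGroup α ⧸ H) := insert ↑(1 : FreeGroup α)
    (W.biUnion fun w => w.toWord.tails.toFinset.image fun M => (mk M : FreeGroup α ⧸ H))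
  obtain ⟨φ, hφ⟩ := exists_hom_perm_apply_eq_smul (α := α) Y
  let pt : Y := ⟨↑(1 : FreeGroup α), Finset.mem_insert_self _ _⟩
  refine ⟨(MulAction.stabilizer _ pt).comap φ, ?_, fun w hw => ?_⟩
  · simpa using Subgroup.relIndex_comap_ne_zero φ (K := ⊤)
      (by rw [Subgroup.relIndex_top_right]; exact Subgroup.index_ne_zero_of_finite)
  · have hφw : (φ w pt : FreeGroup α ⧸ H) = w := by
      have := hφ w.toWord pt fun M hM => Finset.mem_insert_of_mem <| Finset.mem_biUnion.2
        ⟨w, hw, Finset.mem_image.2 ⟨M, by simpa using hM, by simp [pt]⟩⟩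
      simpa [pt, mk_toWord] using this
    rw [Subgroup.mem_comap, MulAction.mem_stabilizer_iff, Perm.smul_def, ← Subtype.coe_inj, hφw,
      QuotientGroup.eq]
    simp

end FreeGroup

/-- M. Hall's theorem: every finitely generated subgroup of a free group of finite rank
is closed in the profinite topology. -/
theorem hall_fg_subgroup_closed (n : ℕ) (H : Subgroup (FreeGroup (Fin n))) (hH : H.FG) :
    @IsClosed _ (profiniteTopology (FreeGroup (Fin n))) (H : Set (FreeGroup (Fin n))) := by
  obtain ⟨T, rfl⟩ := hH
  refine isClosed_profiniteTopology_of_forall_notMem _ fun g hg => ?_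
  obtain ⟨K, hK, hKW⟩ :=
    FreeGroup.exists_index_ne_zero_forall_mem_iff (Subgroup.closure T) (insert g T)
  refine ⟨K, hK, (Subgroup.closure_le K).2 fun t ht => ?_, fun hgK => hg ?_⟩
  · exact (hKW t (Finset.mem_insert_of_mem ht)).2 (Subgroup.subset_closure ht)
  · exact (hKW g (Finset.mem_insert_self g T)).1 hgK
end

section
/- In a free group F of finite rank, the subgroup generated by a rational subset L of F is finitely generated (Anissimow–Seifert). -/
open Pointwise

/-- The rational subsets of a group (or semigroup): the smallest family of subsets
containing the finite subsets and closed under union, (pointwise) product, and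
plus-iteration `Y ↦ Y⁺` (the generated subsemigroup). -/
inductive IsRational {M : Type} [Group M] : Set M → Prop
  | finite (s : Set M) : s.Finite → IsRational s
  | union (s t : Set M) : IsRational s → IsRational t → IsRational (s ∪ t)
  | mul (s t : Set M) : IsRational s → IsRational t → IsRational (s * t)
  | plus (s : Set M) : IsRational s → IsRational (Subsemigroup.closure s : Set M)

/-!
The argument works in every group. Fixing `s₀ ∈ s` and `t₀ ∈ t`, the identity
`a * b = (a * t₀) * (s₀ * t₀)⁻¹ * (s₀ * b)` shows that `⟨s * t⟩ = ⟨s * t₀⟩ ⊔ ⟨s₀ * t⟩`, and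
similarly `⟨s⁺⟩ = ⟨s⟩ ⊔ ⟨s * s⟩`. The translates `s * t₀` and `s₀ * t` are no longer among the
sets the rational structure is built from, so one proves by induction on rationality that every
two-sided translate `g * L * h` of a rational set generates a finitely generated subgroup.
-/

namespace Subgroup

variable {G : Type*} [Group G]

theorem closure_image_mul_mul_setMul (g h : G) {s t : Set G} {s₀ t₀ : G}
    (hs₀ : s₀ ∈ s) (ht₀ : t₀ ∈ t) :
    closure ((g * · * h) '' (s * t)) =
      closure ((g * · * (t₀ * h)) '' s) ⊔ closure ((g * s₀ * · * h) '' t) := by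
  apply le_antisymm
  · rw [closure_le]
    rintro - ⟨-, ⟨a, ha, b, hb, rfl⟩, rfl⟩
    have hfactor : g * (a * b) * h =
        (g * a * (t₀ * h)) * (g * s₀ * (t₀ * h))⁻¹ * (g * s₀ * b * h) := by group
    show g * (a * b) * h ∈ _
    rw [hfactor]
    exact mul_mem
      (mul_mem (mem_sup_left (subset_closure ⟨a, ha, rfl⟩))
        (inv_mem (mem_sup_left (subset_closure ⟨s₀, hs₀, rfl⟩))))
      (mem_sup_right (subset_closure ⟨b, hb, rfl⟩))
  · apply sup_le <;> rw [closure_le]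
    · rintro - ⟨a, ha, rfl⟩
      exact subset_closure ⟨a * t₀, Set.mul_mem_mul ha ht₀, by group⟩
    · rintro - ⟨b, hb, rfl⟩
      exact subset_closure ⟨s₀ * b, Set.mul_mem_mul hs₀ hb, by group⟩

theorem closure_image_mul_mul_subsemigroupClosure (g h : G) {s : Set G} {a₀ : G}
    (ha₀ : a₀ ∈ s) :
    closure ((g * · * h) '' (Subsemigroup.closure s : Set G)) =
      closure ((g * · * h) '' s) ⊔ closure ((g * · * h) '' (s * s)) := by
  set K := closure ((g * · * h) '' s) ⊔ closure ((g * · * h) '' (s * s))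
  apply le_antisymm
  · rw [closure_le]
    rintro - ⟨x, hx, rfl⟩
    have ha₀K : g * a₀ * h ∈ K := mem_sup_left (subset_closure ⟨a₀, ha₀, rfl⟩)
    -- Strengthened so that `x * y` can be split as `(x * a₀) * a₀⁻¹ * y`.
    have hmem : g * x * h ∈ K ∧ g * (x * a₀) * h ∈ K := by
      induction hx using Subsemigroup.closure_induction with
      | mem a ha =>
        exact ⟨mem_sup_left (subset_closure ⟨a, ha, rfl⟩),
          mem_sup_right (subset_closure ⟨a * a₀, Set.mul_mem_mul ha ha₀, rfl⟩)⟩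
      | mul x y _ _ ihx ihy =>
        have hsplit : ∀ z, g * (x * z) * h =
            (g * (x * a₀) * h) * (g * a₀ * h)⁻¹ * (g * z * h) := fun z => by group
        exact ⟨hsplit y ▸ mul_mem (mul_mem ihx.2 (inv_mem ha₀K)) ihy.1,
          mul_assoc x y a₀ ▸ hsplit (y * a₀) ▸ mul_mem (mul_mem ihx.2 (inv_mem ha₀K)) ihy.2⟩
    exact hmem.1
  · apply sup_le <;> rw [closure_le] <;> refine fun y hy => subset_closure (Set.image_mono ?_ hy)
    · exact Subsemigroup.subset_closure
    · rintro - ⟨a, ha, b, hb, rfl⟩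
      exact mul_mem (Subsemigroup.subset_closure ha) (Subsemigroup.subset_closure hb)

end Subgroup

open Subgroup in
theorem IsRational.fg_closure_image_mul_mul {M : Type} [Group M] {L : Set M}
    (hL : IsRational L) (g h : M) : (closure ((g * · * h) '' L)).FG := by
  induction hL generalizing g h with
  | finite s hs => exact ⟨(hs.image _).toFinset, by rw [Set.Finite.coe_toFinset]⟩
  | union s t _ _ ihs iht =>
    rw [Set.image_union, Subgroup.closure_union]
    exact (ihs g h).sup (iht g h)
  | mul s t _ _ ihs iht =>
    obtain rfl | ⟨s₀, hs₀⟩ := s.eq_empty_or_nonempty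
    · simpa using FG.bot
    obtain rfl | ⟨t₀, ht₀⟩ := t.eq_empty_or_nonempty
    · simpa using FG.bot
    rw [closure_image_mul_mul_setMul g h hs₀ ht₀]
    exact (ihs g (t₀ * h)).sup (iht (g * s₀) h)
  | plus s _ ih =>
    obtain rfl | ⟨a₀, ha₀⟩ := s.eq_empty_or_nonempty
    · simpa using FG.bot
    rw [closure_image_mul_mul_subsemigroupClosure g h ha₀,
      closure_image_mul_mul_setMul g h ha₀ ha₀]
    exact (ih g h).sup ((ih g (a₀ * h)).sup (ih (g * a₀) h))

theorem IsRational.fg_closure {M : Type} [Group M] {L : Set M} (hL : IsRational L) :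
    (Subgroup.closure L).FG := by
  simpa using hL.fg_closure_image_mul_mul 1 1

/-- Anissimow–Seifert: in a free group of finite rank, the subgroup generated by a
rational subset is finitely generated. -/
theorem subgroup_of_rational_fg (n : ℕ) (L : Set (FreeGroup (Fin n)))
    (hL : IsRational L) : (Subgroup.closure L).FG :=
  hL.fg_closure
end

section
/- Let φ : G → H be a continuous surjective homomorphism of topological groups and suppose that for subsets K, L of G the 'Pin-Reutenauer' equalities cl(KL) = cl(K)cl(L) and cl(L⁺) = ⟨cl(L)⟩ hold for all members of a family C closed under the rational operations and containing the finite sets, where moreover φ(cl(S)) = cl(φ(S)) holds for finite S. Then φ(cl(L)) = cl(φ(L)) for every L ∈ C. -/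
open Pointwise

/-- The closure of a base family `C0` of subsets of a group under the rational
operations: union, (pointwise) product and plus-iteration (generated subsemigroup). -/
inductive RatFrom {G : Type} [Group G] (C0 : Set (Set G)) : Set G → Prop
  | base (s : Set G) : s ∈ C0 → RatFrom C0 s
  | union (s t : Set G) : RatFrom C0 s → RatFrom C0 t → RatFrom C0 (s ∪ t)
  | mul (s t : Set G) : RatFrom C0 s → RatFrom C0 t → RatFrom C0 (s * t)
  | plus (s : Set G) : RatFrom C0 s → RatFrom C0 (Subsemigroup.closure s : Set G)

/-!
Induction along the rational expression of `L`. Images and closures both commute with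
unions. For a product (resp. a plus-iteration) the Pin-Reutenauer equalities, applied in `G`
and again in `H`, trade the closure of the product (resp. of the generated semigroup) for the
product of the closures (resp. the group generated by the closure), and images commute with
pointwise products and with generated subgroups and subsemigroups.
-/

section ImageClosure

variable {α β : Type*} [TopologicalSpace α] [TopologicalSpace β]

theorem image_closure_union {f : α → β} {s t : Set α}
    (hs : f '' closure s = closure (f '' s)) (ht : f '' closure t = closure (f '' t)) :
    f '' closure (s ∪ t) = closure (f '' (s ∪ t)) := by
  rw [closure_union, Set.image_union, hs, ht, Set.image_union, closure_union]

variable [Mul α] [Mul β]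

theorem image_closure_mul {f : α →ₙ* β} {s t : Set α}
    (hα : closure (s * t) = closure s * closure t)
    (hβ : closure (f '' s * f '' t) = closure (f '' s) * closure (f '' t))
    (hs : f '' closure s = closure (f '' s)) (ht : f '' closure t = closure (f '' t)) :
    f '' closure (s * t) = closure (f '' (s * t)) := by
  rw [hα, Set.image_mul, hs, ht, ← hβ, Set.image_mul]

end ImageClosure

theorem MulHom.image_subsemigroupClosure {M N : Type*} [Mul M] [Mul N] (f : M →ₙ* N)
    (s : Set M) :
    f '' (Subsemigroup.closure s : Set M) = Subsemigroup.closure (f '' s) := by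
  rw [← Subsemigroup.coe_map, MulHom.map_mclosure]

theorem MonoidHom.image_subgroupClosure {G H : Type*} [Group G] [Group H] (f : G →* H)
    (s : Set G) :
    f '' (Subgroup.closure s : Set G) = Subgroup.closure (f '' s) := by
  rw [← Subgroup.coe_map, MonoidHom.map_closure]

theorem image_closure_subsemigroupClosure {G H : Type*} [Group G] [Group H]
    [TopologicalSpace G] [TopologicalSpace H] {f : G →* H} {s : Set G}
    (hG : closure (Subsemigroup.closure s : Set G) = Subgroup.closure (closure s))
    (hH : closure (Subsemigroup.closure (f '' s) : Set H) = Subgroup.closure (closure (f '' s)))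
    (hs : f '' closure s = closure (f '' s)) :
    f '' closure (Subsemigroup.closure s : Set G)
      = closure (f '' (Subsemigroup.closure s : Set G)) := by
  rw [hG, f.image_subgroupClosure, hs, ← hH]
  exact congrArg closure ((f : G →ₙ* H).image_subsemigroupClosure s).symm

theorem fullness_of_PR_general (G H : Type) [Group G] [Group H]
    [TopologicalSpace G] [TopologicalSpace H]
    (φ : G →* H)
    (C0 : Set (Set G)) (hfin : ∀ s ∈ C0, s.Finite)
    (hPRmulG : ∀ K L : Set G, RatFrom C0 K → RatFrom C0 L →
      closure (K * L) = closure K * closure L)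
    (hPRplusG : ∀ L : Set G, RatFrom C0 L →
      closure (Subsemigroup.closure L : Set G) = (Subgroup.closure (closure L) : Set G))
    (hPRmulH : ∀ K L : Set G, RatFrom C0 K → RatFrom C0 L →
      closure ((φ '' K) * (φ '' L)) = closure (φ '' K) * closure (φ '' L))
    (hPRplusH : ∀ L : Set G, RatFrom C0 L →
      closure (Subsemigroup.closure (φ '' L) : Set H)
        = (Subgroup.closure (closure (φ '' L)) : Set H))
    (hfinS : ∀ S : Set G, S.Finite → φ '' closure S = closure (φ '' S)) :
    ∀ L : Set G, RatFrom C0 L → φ '' closure L = closure (φ '' L) := by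
  intro L hL
  induction hL with
  | base s hs => exact hfinS s (hfin s hs)
  | union s t _ _ ihs iht => exact image_closure_union ihs iht
  | mul s t hs ht ihs iht =>
    exact image_closure_mul (f := (φ : G →ₙ* H)) (hPRmulG s t hs ht) (hPRmulH s t hs ht) ihs iht
  | plus s hs ihs => exact image_closure_subsemigroupClosure (hPRplusG s hs) (hPRplusH s hs) ihs

/-- Let `φ : G → H` be a continuous surjective homomorphism of topological groups, and
let `C` be the closure under the rational operations of a family of finite subsets of
`G`. Suppose the Pin-Reutenauer equalities `cl(KL) = cl(K)·cl(L)` and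
`cl(L⁺) = ⟨cl(L)⟩` hold for members of `C` (in `G`) and for their images under `φ`
(in `H`), and that `φ(cl(S)) = cl(φ(S))` for every finite `S`. Then
`φ(cl(L)) = cl(φ(L))` for every `L ∈ C`. -/
theorem fullness_of_PR (G H : Type) [Group G] [Group H]
    [TopologicalSpace G] [TopologicalSpace H] [IsTopologicalGroup G] [IsTopologicalGroup H]
    (φ : G →* H) (hcont : Continuous φ) (hsurj : Function.Surjective φ)
    (C0 : Set (Set G)) (hfin : ∀ s ∈ C0, s.Finite)
    (hPRmulG : ∀ K L : Set G, RatFrom C0 K → RatFrom C0 L →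
      closure (K * L) = closure K * closure L)
    (hPRplusG : ∀ L : Set G, RatFrom C0 L →
      closure (Subsemigroup.closure L : Set G) = (Subgroup.closure (closure L) : Set G))
    (hPRmulH : ∀ K L : Set G, RatFrom C0 K → RatFrom C0 L →
      closure ((φ '' K) * (φ '' L)) = closure (φ '' K) * closure (φ '' L))
    (hPRplusH : ∀ L : Set G, RatFrom C0 L →
      closure (Subsemigroup.closure (φ '' L) : Set H)
        = (Subgroup.closure (closure (φ '' L)) : Set H))
    (hfinS : ∀ S : Set G, S.Finite → φ '' closure S = closure (φ '' S)) :
    ∀ L : Set G, RatFrom C0 L → φ '' closure L = closure (φ '' L) :=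
  fullness_of_PR_general G H φ C0 hfin hPRmulG hPRplusG hPRmulH hPRplusH hfinS
end

section
/- For every subgroup H of the profinite completion of ℤ (equivalently, of N̂ ∖ ℕ viewed as the free profinite group on one generator) and every element α, if some positive multiple dα lies in the subgroup of elements of the form ω + n (n ∈ ℤ), then writing dα = ω + n forces d | n. -/
/-- `β = ω + n` where `ω = lim k!` and `n : ℤ`: on a finite monoid of cardinality `c`,
`x^{ω+n} = x^{(|n|+1)·c! + n}`. The elements `ω + n`, `n ∈ ℤ`, form a subgroup
isomorphic to `ℤ` inside the procyclic group `N̂ ∖ ℕ`. -/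
def Nhat.IsOmegaAdd (n : ℤ) (β : Nhat) : Prop :=
  ∀ (M : Type) [Monoid M] [Fintype M] (x : M),
    β.F M x = x ^ ((((n.natAbs + 1) * Nat.factorial (Fintype.card M) : ℕ) : ℤ) + n).toNat

/-
In a finite group of order `c`, `ω` acts as `c! ≡ 0`, so `ω + n` acts as the integer power `n`,
while `d • α` is trivial when `c = d`. Evaluating `d • α = ω + n` at a generator of the cyclic
group of order `d` therefore gives `x ^ n = 1`, i.e. `d ∣ n`.
-/

open Nat in
theorem pow_factorial_card_eq_one {G : Type} [Group G] [Fintype G] (x : G) :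
    x ^ (Fintype.card G)! = 1 :=
  orderOf_dvd_iff_pow_eq_one.mp <|
    orderOf_dvd_card.trans (dvd_factorial Fintype.card_pos le_rfl)

namespace Nhat

theorem nsmul_card_F_eq_one (α : Nhat) {G : Type} [Group G] [Fintype G] (x : G) :
    (α.nsmul (Fintype.card G)).F G x = 1 :=
  pow_card_eq_one

open Nat in
theorem IsOmegaAdd.F_eq_zpow {n : ℤ} {β : Nhat} (hβ : β.IsOmegaAdd n) {G : Type} [Group G]
    [Fintype G] (x : G) : β.F G x = x ^ n := by
  have hexp : 0 ≤ (((n.natAbs + 1) * (Fintype.card G)! : ℕ) : ℤ) + n := by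
    have : n.natAbs + 1 ≤ (n.natAbs + 1) * (Fintype.card G)! :=
      Nat.le_mul_of_pos_right _ (factorial_pos _)
    omega
  rw [hβ, ← zpow_natCast, Int.toNat_of_nonneg hexp, zpow_add, zpow_natCast, pow_mul',
    pow_factorial_card_eq_one, one_pow, one_mul]

end Nhat

/-- If a positive multiple `d·α` of an element `α` of the procyclic group lies in the
subgroup of elements of the form `ω + n` (`n ∈ ℤ`), then writing `d·α = ω + n`
forces `d ∣ n`. -/
theorem dvd_of_nsmul_eq_omega_add (d : ℕ) (hd : 0 < d) (n : ℤ) (α β : Nhat)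
    (hβ : Nhat.IsOmegaAdd n β) (h : Nhat.nsmul d α = β) :
    (d : ℤ) ∣ n := by
  have : NeZero d := ⟨hd.ne'⟩
  let x : Multiplicative (ZMod d) := .ofAdd 1
  have hx : x ^ n = 1 := by
    simpa only [← hβ.F_eq_zpow, ← h, Fintype.card_multiplicative, ZMod.card] using
      α.nsmul_card_F_eq_one x
  rwa [← orderOf_dvd_iff_zpow_eq_one, orderOf_ofAdd_eq_addOrderOf, ZMod.addOrderOf_one] at hx
end
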